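/- arXiv:1602.04503 — 2 statements merged into one kernel-verified Lean document; each statement's English description precedes it below -/
import Mathlib

section
/- Every well-formed configuration of the source language is either (1) a final configuration (the current expression is exit, or it is a value with empty continuation and empty call stack), or (2) reduces in one step to a well-formed configuration, or (3) is a stuck configuration of one of two forms: an out-of-bounds buffer read (C, s, σ, b[□]::K, i) with s[C,b,i] undefined, or an out-of-bounds buffer write (C, s, σ, b[i]:=□::K, i') with s[C,b,i] undefined. -/
/- STATEMENT 1: Partial type safety for the source language: an imperative language
with components, procedures and buffers, with a continuation-based small-step
semantics. -/

namespace Src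

inductive Op where
  | seq | add | sub | mul | eq | le

def Op.denote : Op → ℤ → ℤ → ℤ
  | .seq, _, j => j
  | .add, i, j => i + j
  | .sub, i, j => i - j
  | .mul, i, j => i * j
  | .eq, i, j => if i = j then 1 else 0
  | .le, i, j => if i ≤ j then 1 else 0

/-- Expressions: values, binary operations, conditionals, buffer reads/writes,
cross-component procedure calls `C.P(e)` and `exit`. -/
inductive Expr where
  | val : ℤ → Expr
  | binop : Op → Expr → Expr → Expr
  | ite : Expr → Expr → Expr → Expr
  | read : ℕ → Expr → Expr                 -- b[e]
  | write : ℕ → Expr → Expr → Expr         -- b[e1] := e2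
  | call : ℕ → ℕ → Expr → Expr             -- C.P(e)
  | exit : Expr

/-- Flat evaluation contexts E. -/
inductive FlatCtx where
  | binopL : Op → Expr → FlatCtx           -- □ ⊗ e2
  | binopR : Op → ℤ → FlatCtx              -- i1 ⊗ □
  | iteC : Expr → Expr → FlatCtx           -- if □ then e1 else e2
  | readB : ℕ → FlatCtx                    -- b[□]
  | writeL : ℕ → Expr → FlatCtx            -- b[□] := e2
  | writeR : ℕ → ℤ → FlatCtx               -- b[i1] := □
  | callC : ℕ → ℕ → FlatCtx                -- C.P(□)

/-- Continuations are lists of flat evaluation contexts. -/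
abbrev Cont := List FlatCtx

/-- The global state maps a component and a buffer id to an (optional) buffer. -/
abbrev State := ℕ → ℕ → Option (List ℤ)

/-- Call stack: saved component, saved argument value, saved continuation. -/
abbrev Stack := List (ℕ × ℤ × Cont)

/-- `s[C,b,i]`: defined iff buffer `b` of component `C` exists and `i` is in bounds. -/
def getBuf (s : State) (C b : ℕ) (i : ℤ) : Option ℤ :=
  (s C b).bind fun l =>
    if h : 0 ≤ i ∧ i.toNat < l.length then some (l.get ⟨i.toNat, h.2⟩) else none

def setBuf (s : State) (C b : ℕ) (i v : ℤ) : State :=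
  fun C' b' =>
    if C' = C ∧ b' = b then (s C b).map (fun l => l.set i.toNat v) else s C' b'

/-- Configurations (C, s, σ, K, e). -/
structure Cfg where
  C : ℕ
  s : State
  σ : Stack
  K : Cont
  e : Expr

/-- Small-step semantics, parameterized by the procedure bodies Δ. -/
inductive Step (Δ : ℕ → ℕ → Option Expr) : Cfg → Cfg → Prop where
  | binop_push : ∀ C s σ K op e1 e2,
      Step Δ ⟨C,s,σ,K,.binop op e1 e2⟩ ⟨C,s,σ,.binopL op e2 :: K, e1⟩
  | binop_swap : ∀ C s σ K op e2 i,
      Step Δ ⟨C,s,σ,.binopL op e2 :: K,.val i⟩ ⟨C,s,σ,.binopR op i :: K, e2⟩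
  | binop_done : ∀ C s σ K op i1 i2,
      Step Δ ⟨C,s,σ,.binopR op i1 :: K,.val i2⟩ ⟨C,s,σ,K,.val (op.denote i1 i2)⟩
  | ite_push : ∀ C s σ K e e1 e2,
      Step Δ ⟨C,s,σ,K,.ite e e1 e2⟩ ⟨C,s,σ,.iteC e1 e2 :: K, e⟩
  | ite_true : ∀ C s σ K e1 e2 (i : ℤ), i ≠ 0 →
      Step Δ ⟨C,s,σ,.iteC e1 e2 :: K,.val i⟩ ⟨C,s,σ,K,e1⟩
  | ite_false : ∀ C s σ K e1 e2,
      Step Δ ⟨C,s,σ,.iteC e1 e2 :: K,.val 0⟩ ⟨C,s,σ,K,e2⟩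
  | read_push : ∀ C s σ K b e,
      Step Δ ⟨C,s,σ,K,.read b e⟩ ⟨C,s,σ,.readB b :: K, e⟩
  | read_done : ∀ C s σ K b i v, getBuf s C b i = some v →
      Step Δ ⟨C,s,σ,.readB b :: K,.val i⟩ ⟨C,s,σ,K,.val v⟩
  | write_push : ∀ C s σ K b e1 e2,
      Step Δ ⟨C,s,σ,K,.write b e1 e2⟩ ⟨C,s,σ,.writeL b e2 :: K, e1⟩
  | write_swap : ∀ C s σ K b e2 i1,
      Step Δ ⟨C,s,σ,.writeL b e2 :: K,.val i1⟩ ⟨C,s,σ,.writeR b i1 :: K, e2⟩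
  | write_done : ∀ C s σ K b i1 i2 v, getBuf s C b i1 = some v →
      Step Δ ⟨C,s,σ,.writeR b i1 :: K,.val i2⟩ ⟨C, setBuf s C b i1 i2, σ, K,.val i2⟩
  | call_push : ∀ C s σ K C' P' e,
      Step Δ ⟨C,s,σ,K,.call C' P' e⟩ ⟨C,s,σ,.callC C' P' :: K, e⟩
  | call_do : ∀ C s σ K C' P' i body iarg,
      Δ C' P' = some body → getBuf s C 0 0 = some iarg →
      Step Δ ⟨C,s,σ,.callC C' P' :: K,.val i⟩
             ⟨C', setBuf s C' 0 0 i, (C, iarg, K) :: σ, [], body⟩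
  | ret : ∀ C s σ K' C' i' i,
      Step Δ ⟨C,s,(C',i',K') :: σ,[],.val i⟩ ⟨C', setBuf s C' 0 0 i', σ, K',.val i⟩

/-- Final configurations: the expression is `exit`, or it is a value with empty
continuation and empty call stack. -/
def Final (cfg : Cfg) : Prop :=
  cfg.e = .exit ∨ (∃ i, cfg.e = .val i ∧ cfg.K = [] ∧ cfg.σ = [])

/-- Buffer `b` of component `C` is defined. -/
def bufDefined (s : State) (C b : ℕ) : Prop := (s C b).isSome
/-- The argument cell (first cell of the first buffer) of component `C` is defined. -/
def argDefined (s : State) (C : ℕ) : Prop := ∃ l, s C 0 = some l ∧ 0 < l.length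

/-- Well-formed expressions: all used buffers are defined, all called procedures
of imported components are defined (public), argument cells of caller and callee
components exist. -/
def wfExpr (Δ : ℕ → ℕ → Option Expr) (s : State) (C : ℕ) : Expr → Prop
  | .val _ => True
  | .binop _ e1 e2 => wfExpr Δ s C e1 ∧ wfExpr Δ s C e2
  | .ite e e1 e2 => wfExpr Δ s C e ∧ wfExpr Δ s C e1 ∧ wfExpr Δ s C e2
  | .read b e => bufDefined s C b ∧ wfExpr Δ s C e
  | .write b e1 e2 => bufDefined s C b ∧ wfExpr Δ s C e1 ∧ wfExpr Δ s C e2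
  | .call C' P' e =>
      (Δ C' P').isSome ∧ argDefined s C' ∧ argDefined s C ∧ wfExpr Δ s C e
  | .exit => True

def wfFlat (Δ : ℕ → ℕ → Option Expr) (s : State) (C : ℕ) : FlatCtx → Prop
  | .binopL _ e => wfExpr Δ s C e
  | .binopR _ _ => True
  | .iteC e1 e2 => wfExpr Δ s C e1 ∧ wfExpr Δ s C e2
  | .readB b => bufDefined s C b
  | .writeL b e2 => bufDefined s C b ∧ wfExpr Δ s C e2
  | .writeR b _ => bufDefined s C b
  | .callC C' P' => (Δ C' P').isSome ∧ argDefined s C' ∧ argDefined s C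

def wfCont (Δ : ℕ → ℕ → Option Expr) (s : State) (C : ℕ) (K : Cont) : Prop :=
  ∀ E ∈ K, wfFlat Δ s C E

def wfStack (Δ : ℕ → ℕ → Option Expr) (s : State) (σ : Stack) : Prop :=
  ∀ fr ∈ σ, wfCont Δ s fr.1 fr.2.2 ∧ argDefined s fr.1

def wfBodies (Δ : ℕ → ℕ → Option Expr) (s : State) : Prop :=
  ∀ C P body, Δ C P = some body → wfExpr Δ s C body

/-- Well-formed configurations (component names are unique by construction, since
components are indexed by their names). -/
def WfCfg (Δ : ℕ → ℕ → Option Expr) (cfg : Cfg) : Prop :=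
  wfExpr Δ cfg.s cfg.C cfg.e ∧ wfCont Δ cfg.s cfg.C cfg.K ∧
  wfStack Δ cfg.s cfg.σ ∧ wfBodies Δ cfg.s ∧ argDefined cfg.s cfg.C

/-! A buffer write changes neither which buffers exist nor their lengths, and well-formedness
only sees that shape, so it survives every update of the state; the remaining checks are local
to the frame being reduced or pushed. Progress is a case analysis on the current expression and,
for a value, on the top of the continuation and of the call stack: well-formedness supplies every
premise of the step rules except the bounds checks of `read_done` and `write_done`. -/

lemma map_length_setBuf (s : State) (C b : ℕ) (i v : ℤ) (C' b' : ℕ) :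
    (setBuf s C b i v C' b').map List.length = (s C' b').map List.length := by
  unfold setBuf
  split_ifs with h
  · obtain ⟨rfl, rfl⟩ := h
    simp [Option.map_map, Function.comp_def]
  · rfl

lemma bufDefined_iff_map_length (s : State) (C b : ℕ) :
    bufDefined s C b ↔ ((s C b).map List.length).isSome := by
  rw [bufDefined, Option.isSome_map]

lemma argDefined_iff_map_length (s : State) (C : ℕ) :
    argDefined s C ↔ ∃ n, (s C 0).map List.length = some n ∧ 0 < n := by
  simp [argDefined, Option.map_eq_some_iff]

section SetBuf

variable {Δ : ℕ → ℕ → Option Expr} {s : State} {C b : ℕ} {i v : ℤ}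

@[simp]
lemma bufDefined_setBuf {C' b' : ℕ} :
    bufDefined (setBuf s C b i v) C' b' ↔ bufDefined s C' b' := by
  simp only [bufDefined_iff_map_length, map_length_setBuf]

@[simp]
lemma argDefined_setBuf {C' : ℕ} : argDefined (setBuf s C b i v) C' ↔ argDefined s C' := by
  simp only [argDefined_iff_map_length, map_length_setBuf]

@[simp]
lemma wfExpr_setBuf {C' : ℕ} {e : Expr} :
    wfExpr Δ (setBuf s C b i v) C' e ↔ wfExpr Δ s C' e := by
  induction e <;> simp_all [wfExpr]

@[simp]
lemma wfFlat_setBuf {C' : ℕ} {E : FlatCtx} :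
    wfFlat Δ (setBuf s C b i v) C' E ↔ wfFlat Δ s C' E := by
  cases E <;> simp [wfFlat]

@[simp]
lemma wfCont_setBuf {C' : ℕ} {K : Cont} :
    wfCont Δ (setBuf s C b i v) C' K ↔ wfCont Δ s C' K := by
  simp [wfCont]

@[simp]
lemma wfStack_setBuf {σ : Stack} : wfStack Δ (setBuf s C b i v) σ ↔ wfStack Δ s σ := by
  simp [wfStack]

@[simp]
lemma wfBodies_setBuf : wfBodies Δ (setBuf s C b i v) ↔ wfBodies Δ s := by
  simp [wfBodies]

lemma wfCfg_setBuf {C' : ℕ} {σ : Stack} {K : Cont} {e : Expr} :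
    WfCfg Δ ⟨C', setBuf s C b i v, σ, K, e⟩ ↔ WfCfg Δ ⟨C', s, σ, K, e⟩ := by
  simp [WfCfg]

end SetBuf

lemma wfCont_cons {Δ : ℕ → ℕ → Option Expr} {s : State} {C : ℕ} {E : FlatCtx}
    {K : Cont} :
    wfCont Δ s C (E :: K) ↔ wfFlat Δ s C E ∧ wfCont Δ s C K :=
  List.forall_mem_cons

lemma exists_getBuf_of_argDefined {s : State} {C : ℕ} (h : argDefined s C) :
    ∃ v, getBuf s C 0 0 = some v := by
  obtain ⟨l, hl, hlen⟩ := h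
  exact ⟨l[0], by simp [getBuf, hl, hlen]⟩

namespace WfCfg

variable {Δ : ℕ → ℕ → Option Expr} {C : ℕ} {s : State} {σ : Stack} {K : Cont} {e : Expr}

lemma push {E : FlatCtx} {e' : Expr} (hwf : WfCfg Δ ⟨C, s, σ, K, e⟩)
    (hE : wfFlat Δ s C E) (he' : wfExpr Δ s C e') : WfCfg Δ ⟨C, s, σ, E :: K, e'⟩ :=
  ⟨he', wfCont_cons.2 ⟨hE, hwf.2.1⟩, hwf.2.2⟩

lemma pop {E : FlatCtx} {e' : Expr} (hwf : WfCfg Δ ⟨C, s, σ, E :: K, e⟩)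
    (he' : wfExpr Δ s C e') : WfCfg Δ ⟨C, s, σ, K, e'⟩ :=
  ⟨he', (wfCont_cons.1 hwf.2.1).2, hwf.2.2⟩

lemma exists_push_step (hwf : WfCfg Δ ⟨C, s, σ, K, e⟩) (hval : ∀ i, e ≠ .val i)
    (hexit : e ≠ .exit) : ∃ cfg', Step Δ ⟨C, s, σ, K, e⟩ cfg' ∧ WfCfg Δ cfg' := by
  have he := hwf.1
  cases e with
  | val i => exact absurd rfl (hval i)
  | exit => exact absurd rfl hexit
  | binop op e1 e2 => exact ⟨_, .binop_push .., hwf.push he.2 he.1⟩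
  | ite e e1 e2 => exact ⟨_, .ite_push .., hwf.push he.2 he.1⟩
  | read b e => exact ⟨_, .read_push .., hwf.push he.1 he.2⟩
  | write b e1 e2 => exact ⟨_, .write_push .., hwf.push ⟨he.1, he.2.2⟩ he.2.1⟩
  | call C' P' e => exact ⟨_, .call_push .., hwf.push ⟨he.1, he.2.1, he.2.2.1⟩ he.2.2.2⟩

lemma exists_return_step {C' : ℕ} {i' i : ℤ}
    (hwf : WfCfg Δ ⟨C, s, (C', i', K) :: σ, [], .val i⟩) :
    ∃ cfg', Step Δ ⟨C, s, (C', i', K) :: σ, [], .val i⟩ cfg' ∧ WfCfg Δ cfg' := by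
  obtain ⟨-, -, hσ, hΔ, -⟩ := hwf
  obtain ⟨⟨hK, harg⟩, hσ⟩ := List.forall_mem_cons.1 hσ
  exact ⟨_, .ret .., wfCfg_setBuf.2 ⟨trivial, hK, hσ, hΔ, harg⟩⟩

lemma exists_call_step {C' P' : ℕ} {i : ℤ}
    (hwf : WfCfg Δ ⟨C, s, σ, .callC C' P' :: K, .val i⟩) :
    ∃ cfg', Step Δ ⟨C, s, σ, .callC C' P' :: K, .val i⟩ cfg' ∧ WfCfg Δ cfg' := by
  obtain ⟨-, hK, hσ, hΔ, harg⟩ := hwf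
  obtain ⟨⟨hbody, harg', -⟩, hK⟩ := wfCont_cons.1 hK
  obtain ⟨body, hbody⟩ := Option.isSome_iff_exists.1 hbody
  obtain ⟨iarg, hiarg⟩ := exists_getBuf_of_argDefined harg
  have hσ' : wfStack Δ s ((C, iarg, K) :: σ) := List.forall_mem_cons.2 ⟨⟨hK, harg⟩, hσ⟩
  exact ⟨_, .call_do C s σ K C' P' i body iarg hbody hiarg,
    wfCfg_setBuf.2 ⟨hΔ _ _ _ hbody, List.forall_mem_nil _, hσ', hΔ, harg'⟩⟩

lemma progress_val_cons {E : FlatCtx} {i : ℤ} (hwf : WfCfg Δ ⟨C, s, σ, E :: K, .val i⟩) :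
    (∃ cfg', Step Δ ⟨C, s, σ, E :: K, .val i⟩ cfg' ∧ WfCfg Δ cfg')
    ∨ (∃ b, E = .readB b ∧ getBuf s C b i = none)
    ∨ (∃ b i₁, E = .writeR b i₁ ∧ getBuf s C b i₁ = none) := by
  have hE := (wfCont_cons.1 hwf.2.1).1
  cases E with
  | binopL op e2 => exact .inl ⟨_, .binop_swap .., (hwf.pop (by trivial)).push trivial hE⟩
  | binopR op i₁ => exact .inl ⟨_, .binop_done .., hwf.pop (by trivial)⟩
  | iteC e1 e2 =>
    obtain rfl | hi := eq_or_ne i 0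
    · exact .inl ⟨_, .ite_false .., hwf.pop hE.2⟩
    · exact .inl ⟨_, .ite_true _ _ _ _ _ _ i hi, hwf.pop hE.1⟩
  | readB b =>
    rcases hb : getBuf s C b i with _ | v
    · exact .inr (.inl ⟨b, rfl, hb⟩)
    · exact .inl ⟨_, .read_done _ _ _ _ _ _ v hb, hwf.pop (by trivial)⟩
  | writeL b e2 => exact .inl ⟨_, .write_swap .., (hwf.pop hE.2).push hE.1 hE.2⟩
  | writeR b i₁ =>
    rcases hb : getBuf s C b i₁ with _ | v
    · exact .inr (.inr ⟨b, i₁, rfl, hb⟩)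
    · exact .inl ⟨_, .write_done _ _ _ _ _ _ _ v hb, wfCfg_setBuf.2 (hwf.pop (by trivial))⟩
  | callC C' P' => exact .inl hwf.exists_call_step

end WfCfg

/-- Partial type safety: every well-formed configuration is (1) final, or
(2) reduces in one step to a well-formed configuration, or (3) is stuck at an
out-of-bounds buffer read `(C,s,σ,b[□]::K,i)` or an out-of-bounds buffer write
`(C,s,σ,b[i]:=□::K,i')` with `s[C,b,i]` undefined. -/
theorem partial_type_safety (Δ : ℕ → ℕ → Option Expr) (cfg : Cfg)
    (hwf : WfCfg Δ cfg) :
    Final cfg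
    ∨ (∃ cfg', Step Δ cfg cfg' ∧ WfCfg Δ cfg')
    ∨ (∃ C s σ b K i, cfg = ⟨C, s, σ, .readB b :: K, .val i⟩ ∧ getBuf s C b i = none)
    ∨ (∃ C s σ b K i i', cfg = ⟨C, s, σ, .writeR b i :: K, .val i'⟩ ∧
        getBuf s C b i = none) := by
  obtain ⟨C, s, σ, K, e⟩ := cfg
  by_cases hexit : e = .exit
  · exact .inl (.inl hexit)
  by_cases hval : ∀ i, e ≠ .val i
  · exact .inr (.inl (hwf.exists_push_step hval hexit))
  obtain ⟨i, rfl⟩ : ∃ i, e = .val i := by simpa using hval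
  match K, σ, hwf with
  | [], [], _ => exact .inl (.inr ⟨i, rfl, rfl, rfl⟩)
  | [], (_, _, _) :: _, hwf => exact .inr (.inl hwf.exists_return_step)
  | E :: K, σ, hwf =>
    rcases hwf.progress_val_cons with hstep | ⟨b, rfl, hb⟩ | ⟨b, i₁, rfl, hb⟩
    · exact .inr (.inl hstep)
    · exact .inr (.inr (.inl ⟨C, s, σ, b, K, i, rfl, hb⟩))
    · exact .inr (.inr (.inr ⟨C, s, σ, b, K, i₁, i, rfl, hb⟩))

end Src
end

section
/- The protected call stack discipline guarantees well-bracketed cross-compartment control flow: in any execution of the low-level machine, the sequence of Call and Return external events forms a well-balanced (Dyck) word, and each Return transfers control exactly to the compartment and program counter saved by the matching Call. -/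
/- STATEMENT 15: The protected call stack discipline guarantees well-bracketed
cross-compartment control flow: Call/Return events form a Dyck word and each
Return resumes exactly at the compartment and program counter saved by the
matching Call. -/
namespace Machine

/-- RISC instruction set of the compartmentalized machine. -/
inductive Instr where
  | nop
  | const (i : ℤ) (rd : ℕ)
  | mov (rs rd : ℕ)
  | load (rp rd : ℕ)
  | store (rp rs : ℕ)
  | jump (r : ℕ)
  | jal (r : ℕ)
  | call (C P : ℕ)
  | ret
  | binop (op : ℤ → ℤ → ℤ) (r1 r2 rd : ℕ)
  | bnz (r : ℕ) (i : ℤ)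
  | halt

/-- Compartment interfaces: imported procedures (compartment, procedure) and
exported procedures. -/
structure Iface where
  imports : Set (ℕ × ℕ)
  exports : Set ℕ

/-- Machine states (C, σ, mem, reg, pc): current compartment, global protected
call stack, partitioned (per-compartment) memory, register file, program
counter. -/
structure MState where
  C : ℕ
  σ : List (ℕ × ℤ)
  mem : ℕ → ℤ → Option ℤ
  reg : ℕ → ℤ
  pc : ℤ

/-- The return-address register used by Jal. -/
def rra : ℕ := 0

/-- Small-step semantics ψ; E ⊢ state → state', where ψ maps compartments to
interfaces and Ep maps procedures to entry points. -/
inductive Step (ψ : ℕ → Iface) (Ep : ℕ → ℕ → ℤ) (decode : ℤ → Option Instr) :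
    MState → MState → Prop where
  | nop : ∀ C σ mem reg pc w,
      mem C pc = some w → decode w = some .nop →
      Step ψ Ep decode ⟨C,σ,mem,reg,pc⟩ ⟨C,σ,mem,reg,pc+1⟩
  | const : ∀ C σ mem reg pc w i rd,
      mem C pc = some w → decode w = some (.const i rd) →
      Step ψ Ep decode ⟨C,σ,mem,reg,pc⟩
        ⟨C,σ,mem,(fun r => if r = rd then i else reg r),pc+1⟩
  | mov : ∀ C σ mem reg pc w rs rd,
      mem C pc = some w → decode w = some (.mov rs rd) →
      Step ψ Ep decode ⟨C,σ,mem,reg,pc⟩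
        ⟨C,σ,mem,(fun r => if r = rd then reg rs else reg r),pc+1⟩
  | load : ∀ C σ mem reg pc w rp rd v,
      mem C pc = some w → decode w = some (.load rp rd) →
      mem C (reg rp) = some v →
      Step ψ Ep decode ⟨C,σ,mem,reg,pc⟩
        ⟨C,σ,mem,(fun r => if r = rd then v else reg r),pc+1⟩
  | store : ∀ C σ mem reg pc w rp rs v,
      mem C pc = some w → decode w = some (.store rp rs) →
      mem C (reg rp) = some v →
      Step ψ Ep decode ⟨C,σ,mem,reg,pc⟩
        ⟨C,σ,(fun C' a => if C' = C ∧ a = reg rp then some (reg rs) else mem C' a),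
         reg,pc+1⟩
  | jump : ∀ C σ mem reg pc w r,
      mem C pc = some w → decode w = some (.jump r) →
      Step ψ Ep decode ⟨C,σ,mem,reg,pc⟩ ⟨C,σ,mem,reg,reg r⟩
  | jal : ∀ C σ mem reg pc w r,
      mem C pc = some w → decode w = some (.jal r) →
      Step ψ Ep decode ⟨C,σ,mem,reg,pc⟩
        ⟨C,σ,mem,(fun r' => if r' = rra then pc + 1 else reg r'),reg r⟩
  | callStep : ∀ C σ mem reg pc w C' P',
      mem C pc = some w → decode w = some (.call C' P') →
      (C' = C ∨ (C', P') ∈ (ψ C).imports) →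
      Step ψ Ep decode ⟨C,σ,mem,reg,pc⟩
        ⟨C',(C, pc + 1) :: σ,mem,reg,Ep C' P'⟩
  | retStep : ∀ C σ' mem reg pc w C' pc',
      mem C pc = some w → decode w = some .ret →
      Step ψ Ep decode ⟨C,(C', pc') :: σ',mem,reg,pc⟩ ⟨C',σ',mem,reg,pc'⟩
  | bnz_taken : ∀ C σ mem reg pc w r i,
      mem C pc = some w → decode w = some (.bnz r i) → reg r ≠ 0 →
      Step ψ Ep decode ⟨C,σ,mem,reg,pc⟩ ⟨C,σ,mem,reg,pc+i⟩
  | bnz_skip : ∀ C σ mem reg pc w r i,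
      mem C pc = some w → decode w = some (.bnz r i) → reg r = 0 →
      Step ψ Ep decode ⟨C,σ,mem,reg,pc⟩ ⟨C,σ,mem,reg,pc+1⟩

/-- The instruction about to execute is `Call C' P'`. -/
def IsCallStep (decode : ℤ → Option Instr) (st : MState) (C' P' : ℕ) : Prop :=
  ∃ w, st.mem st.C st.pc = some w ∧ decode w = some (.call C' P')

/-- The instruction about to execute is `Return`. -/
def IsRetStep (decode : ℤ → Option Instr) (st : MState) : Prop :=
  ∃ w, st.mem st.C st.pc = some w ∧ decode w = some .ret


section Aux
variable {ψ : ℕ → Iface} {Ep : ℕ → ℕ → ℤ} {decode : ℤ → Option Instr}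

lemma call_ret_exclusive {st : MState} {C' P' : ℕ}
    (hc : IsCallStep decode st C' P') (hr : IsRetStep decode st) : False := by
  obtain ⟨w, hw, hd⟩ := hc
  obtain ⟨w', hw', hd'⟩ := hr
  rw [hw] at hw'
  cases hw'
  rw [hd] at hd'
  cases hd'

lemma step_call {st st' : MState} (h : Step ψ Ep decode st st')
    {C' P' : ℕ} (hc : IsCallStep decode st C' P') :
    st'.σ = (st.C, st.pc + 1) :: st.σ ∧ st'.C = C' := by
  obtain ⟨w, hw, hd⟩ := hc
  cases h <;> simp_all

lemma step_ret {st st' : MState} (h : Step ψ Ep decode st st')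
    (hr : IsRetStep decode st) :
    st.σ = (st'.C, st'.pc) :: st'.σ := by
  obtain ⟨w, hw, hd⟩ := hr
  cases h <;> simp_all

lemma step_other {st st' : MState} (h : Step ψ Ep decode st st')
    (hnc : ¬ ∃ C' P', IsCallStep decode st C' P')
    (hnr : ¬ IsRetStep decode st) :
    st'.σ = st.σ := by
  cases h <;> simp_all [IsCallStep, IsRetStep]

end Aux

open Classical in
/-- In any execution (here starting from an empty protected stack),
the stack evolves as a pushdown (Call pushes one frame, Return pops one frame,
all other instructions leave it unchanged), the sequence of Call/Return events is
a balanced Dyck prefix (never more Returns than Calls), and each Return transfers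
control exactly to the compartment and program counter (pc + 1) saved by the
matching Call, restoring its stack. -/
theorem well_bracketed_control_flow
    (ψ : ℕ → Iface) (Ep : ℕ → ℕ → ℤ) (decode : ℤ → Option Instr)
    (n : ℕ) (run : ℕ → MState)
    (hrun : ∀ i < n, Step ψ Ep decode (run i) (run (i+1)))
    (hinit : (run 0).σ = []) :
    -- pushdown evolution of the protected stack
    (∀ i < n,
      ((∃ C' P', IsCallStep decode (run i) C' P') →
        (run (i+1)).σ = ((run i).C, (run i).pc + 1) :: (run i).σ) ∧
      (IsRetStep decode (run i) →
        ∃ fr, (run i).σ = fr :: (run (i+1)).σ ∧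
          (run (i+1)).C = fr.1 ∧ (run (i+1)).pc = fr.2) ∧
      ((¬ ∃ C' P', IsCallStep decode (run i) C' P') →
        ¬ IsRetStep decode (run i) → (run (i+1)).σ = (run i).σ))
    ∧
    -- the Call/Return events form a well-balanced (Dyck) word prefix
    (∀ i ≤ n,
      ((Finset.range i).filter (fun j => IsRetStep decode (run j))).card ≤
      ((Finset.range i).filter (fun j => ∃ C' P', IsCallStep decode (run j) C' P')).card)
    ∧
    -- each Return matches an earlier Call: it restores that Call's stack and
    -- resumes in the calling compartment at the saved return address pc + 1
    (∀ i < n, IsRetStep decode (run i) →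
      ∃ j < i, (∃ C' P', IsCallStep decode (run j) C' P') ∧
        (run (i+1)).σ = (run j).σ ∧
        (run (i+1)).C = (run j).C ∧
        (run (i+1)).pc = (run j).pc + 1) := by
  classical
  -- suffix invariant: every frame on the stack was pushed by an earlier call
  have suffix_inv : ∀ i ≤ n, ∀ fr rest, (fr :: rest) <:+ (run i).σ →
      ∃ j < i, (∃ C' P', IsCallStep decode (run j) C' P') ∧
        (run j).σ = rest ∧ fr = ((run j).C, (run j).pc + 1) := by
    intro i
    induction i with
    | zero =>
      intro _ fr rest hsuf
      rw [hinit] at hsuf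
      exact absurd (List.eq_nil_of_suffix_nil hsuf) (by simp)
    | succ i ih =>
      intro hi fr rest hsuf
      have hstep := hrun i (by omega)
      by_cases hc : ∃ C' P', IsCallStep decode (run i) C' P'
      · obtain ⟨C', P', hc'⟩ := hc
        have hσ := (step_call hstep hc').1
        rw [hσ] at hsuf
        rcases List.suffix_cons_iff.mp hsuf with heq | hsuf'
        · obtain ⟨h1, h2⟩ := List.cons.inj heq
          exact ⟨i, by omega, ⟨C', P', hc'⟩, h2.symm, h1⟩
        · obtain ⟨j, hj, hrest⟩ := ih (by omega) fr rest hsuf'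
          exact ⟨j, by omega, hrest⟩
      · by_cases hr : IsRetStep decode (run i)
        · have hσ := step_ret hstep hr
          have hsuf2 : (fr :: rest) <:+ (run i).σ := by
            rw [hσ]; exact hsuf.trans (List.suffix_cons _ _)
          obtain ⟨j, hj, hrest⟩ := ih (by omega) fr rest hsuf2
          exact ⟨j, by omega, hrest⟩
        · have hσ := step_other hstep hc hr
          rw [hσ] at hsuf
          obtain ⟨j, hj, hrest⟩ := ih (by omega) fr rest hsuf
          exact ⟨j, by omega, hrest⟩
  -- counting invariant
  have key : ∀ i ≤ n,
      ((Finset.range i).filter (fun j => ∃ C' P', IsCallStep decode (run j) C' P')).card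
        = ((Finset.range i).filter (fun j => IsRetStep decode (run j))).card
          + (run i).σ.length := by
    intro i
    induction i with
    | zero => simp [hinit]
    | succ i ih =>
      intro hi
      have ihv := ih (by omega)
      have hstep := hrun i (by omega)
      rw [Finset.range_add_one, Finset.filter_insert, Finset.filter_insert]
      by_cases hc : ∃ C' P', IsCallStep decode (run i) C' P'
      · have hnr : ¬ IsRetStep decode (run i) := fun hr => by
          obtain ⟨C', P', hc'⟩ := hc
          exact call_ret_exclusive hc' hr
        obtain ⟨C', P', hc'⟩ := hc
        have hσ := (step_call hstep hc').1
        rw [if_pos ⟨C', P', hc'⟩, if_neg hnr,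
          Finset.card_insert_of_notMem (by simp), hσ]
        simp only [List.length_cons]
        omega
      · by_cases hr : IsRetStep decode (run i)
        · have hσ := step_ret hstep hr
          rw [if_neg hc, if_pos hr, Finset.card_insert_of_notMem (by simp)]
          have : (run i).σ.length = (run (i+1)).σ.length + 1 := by
            rw [hσ]; simp
          omega
        · have hσ := step_other hstep hc hr
          rw [if_neg hc, if_neg hr, hσ]
          omega
  refine ⟨?_, ?_, ?_⟩
  · intro i hi
    have hstep := hrun i hi
    refine ⟨?_, ?_, fun hnc hnr => step_other hstep hnc hnr⟩
    · rintro ⟨C', P', hc'⟩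
      exact (step_call hstep hc').1
    · intro hr
      exact ⟨((run (i+1)).C, (run (i+1)).pc), step_ret hstep hr, rfl, rfl⟩
  · intro i hi
    have := key i hi
    omega
  · intro i hi hr
    have hstep := hrun i hi
    have hσ := step_ret hstep hr
    have hsuf : (((run (i+1)).C, (run (i+1)).pc) :: (run (i+1)).σ) <:+ (run i).σ := by
      rw [hσ]
    obtain ⟨j, hj, hcall, hrest, hfr⟩ :=
      suffix_inv i (by omega) _ _ hsuf
    obtain ⟨h1, h2⟩ := Prod.mk.injEq .. ▸ hfr
    exact ⟨j, hj, hcall, hrest.symm, h1, h2⟩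


end Machine
end
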